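/- arXiv:2405.07953 — 7 statements merged into one kernel-verified Lean document; each statement's English description precedes it below -/
import Mathlib

section
/- Let d ≥ 1. Work in the d-dimensional torus 𝕋^d, modeled as functions Fin d → AddCircle (1 : ℝ), with coordinatewise addition. Let δ, s ∈ 𝕋^d, and let Z ⊆ 𝕋^d be an open set. Define T := {n ∈ ℕ : s + n•δ ∈ Z}, where n•δ is the n-fold sum of δ. Then either T is empty, or there exists K ∈ ℕ such that for every N ∈ ℕ there exists n ∈ T with N ≤ n ≤ N + K; in particular, in the latter case T is infinite and its elements occur with uniformly bounded gaps. -/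
/-- Uniform recurrence of toric orbits in open sets: for a translation by `δ`
on the torus `𝕋^d` and an open set `Z`, the set of times at which the orbit of
`s` lies in `Z` is either empty, or infinite with uniformly bounded gaps. -/
theorem toric_orbit_uniformly_recurrent
    (d : ℕ) (hd : 1 ≤ d)
    (δ s : Fin d → AddCircle (1 : ℝ))
    (Z : Set (Fin d → AddCircle (1 : ℝ))) (hZ : IsOpen Z) :
    {n : ℕ | s + n • δ ∈ Z} = ∅ ∨
      ∃ K : ℕ, ∀ N : ℕ, ∃ n ∈ {n : ℕ | s + n • δ ∈ Z}, N ≤ n ∧ n ≤ N + K := by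
  rcases Set.eq_empty_or_nonempty {n : ℕ | s + n • δ ∈ Z} with h | ⟨n₀, hn₀⟩
  · exact Or.inl h
  right
  set V : Set (Fin d → AddCircle (1 : ℝ)) := (fun x => s + n₀ • δ + x) ⁻¹' Z with hV
  have hVopen : IsOpen V := hZ.preimage (continuous_const.add continuous_id)
  have hV0 : (0 : Fin d → AddCircle (1:ℝ)) ∈ V := by
    simpa [hV] using hn₀
  set C := closure (Set.range fun m : ℕ => m • δ) with hC
  have hCcomp : IsCompact C := isClosed_closure.isCompact
  have hcover : C ⊆ ⋃ m : ℕ, (fun x => x - m • δ) ⁻¹' V := by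
    intro x hx
    have ho : IsOpen ((fun y => x - y) ⁻¹' V) :=
      hVopen.preimage (continuous_const.sub continuous_id)
    have hxo : x ∈ (fun y => x - y) ⁻¹' V := by simpa using hV0
    rcases mem_closure_iff.mp hx _ ho hxo with ⟨y, hy1, m, rfl⟩
    exact Set.mem_iUnion.mpr ⟨m, hy1⟩
  obtain ⟨t, ht⟩ := hCcomp.elim_finite_subcover _
    (fun m : ℕ => hVopen.preimage (continuous_id.sub continuous_const)) hcover
  set K' := t.sup id with hK'
  refine ⟨n₀ + K', fun N => ?_⟩
  have hmem : ((N - n₀) + K') • δ ∈ C := subset_closure ⟨(N - n₀) + K', rfl⟩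
  rcases Set.mem_iUnion₂.mp (ht hmem) with ⟨i, hi, hxi⟩
  have hiK : i ≤ K' := Finset.le_sup (f := id) hi
  have hile : i ≤ (N - n₀) + K' := le_trans hiK (Nat.le_add_left _ _)
  refine ⟨n₀ + ((N - n₀) + K' - i), ?_, by omega, by omega⟩
  have hmV : ((N - n₀) + K' - i) • δ ∈ V := by
    rw [sub_nsmul δ hile]
    simpa [sub_eq_add_neg] using hxi
  have : s + n₀ • δ + ((N - n₀) + K' - i) • δ ∈ Z := hmV
  simpa [add_nsmul, add_assoc] using this
end

section
/- Let A be a type (the alphabet), Q a finite type (the states), δ : Q → A → Q a transition function, q₀ ∈ Q, and let α : ℕ → A be a disjunctive word, meaning: for every finite word w : List A, the set of positions n such that α(n + k) = w(k) for all k < |w| is infinite. Define the run by run(0) = q₀ and run(n+1) = δ (run n) (α n), and let I := {q ∈ Q : run(n) = q for infinitely many n}. Then: (i) I is nonempty; (ii) I is closed under all transitions, i.e., for every q ∈ I and every a ∈ A, δ q a ∈ I; and (iii) I is strongly connected, i.e., for all p, q ∈ I there exists a finite word u : List A with List.foldl δ p u = q. -/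
/-!
Any two recurring states are joined by a factor of `α`, since the run reads `α` itself. For
closure under a transition `q ⟶ δ q a`, build one word `w` such that reading `w` from any state
that recurs at infinitely many occurrences of `w` passes through `q` and then reads `a`: treat
the finitely many states one at a time, appending a path to `q` followed by `a`; the path exists
because the state reached after `w` recurs as well. Disjunctivity and pigeonhole provide such a
recurring start state, so `δ q a` recurs.
-/

def OccursAt {A : Type*} (α : ℕ → A) (w : List A) (n : ℕ) : Prop :=
  ∀ (k : ℕ) (hk : k < w.length), α (n + k) = w[k]'hk

namespace OccursAt

variable {A : Type*} {α : ℕ → A}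

theorem cons_iff {a : A} {w : List A} {n : ℕ} :
    OccursAt α (a :: w) n ↔ α n = a ∧ OccursAt α w (n + 1) := by
  constructor
  · intro h
    refine ⟨h 0 (by simp), fun k hk => ?_⟩
    have := h (k + 1) (by simpa using hk)
    rwa [List.getElem_cons_succ, ← Nat.add_assoc, Nat.add_right_comm] at this
  · rintro ⟨ha, hw⟩ (_ | k) hk
    · simpa using ha
    · rw [List.getElem_cons_succ, ← Nat.add_assoc, Nat.add_right_comm]
      exact hw k (by simpa using hk)

theorem of_prefix {u w : List A} {n : ℕ} (huw : u <+: w) (h : OccursAt α w n) :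
    OccursAt α u n := by
  obtain ⟨v, rfl⟩ := huw
  intro k hk
  rw [h k (by simp; omega), List.getElem_append_left hk]

theorem factor (α : ℕ → A) (m d : ℕ) :
    OccursAt α ((List.range d).map fun i => α (m + i)) m := by
  intro k hk
  simp

end OccursAt

section Run

variable {A Q : Type*} {δ : Q → A → Q} {α : ℕ → A} {run : ℕ → Q}

theorem run_add_length (hrunS : ∀ n, run (n + 1) = δ (run n) (α n)) {w : List A} {n : ℕ}
    (h : OccursAt α w n) : run (n + w.length) = List.foldl δ (run n) w := by
  induction w generalizing n with
  | nil => simp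
  | cons a w ih =>
    obtain ⟨ha, hw⟩ := OccursAt.cons_iff.mp h
    rw [List.length_cons, ← Nat.add_assoc, Nat.add_right_comm, ih hw, hrunS, ha,
      List.foldl_cons]

theorem exists_foldl_run_eq (hrunS : ∀ n, run (n + 1) = δ (run n) (α n)) {m n : ℕ}
    (hmn : m ≤ n) : ∃ u : List A, List.foldl δ (run m) u = run n := by
  refine ⟨_, (run_add_length hrunS (OccursAt.factor α m (n - m))).symm.trans ?_⟩
  congr 1
  simp only [List.length_map, List.length_range]
  omega

theorem exists_foldl_eq_of_infinite (hrunS : ∀ n, run (n + 1) = δ (run n) (α n)) {p q : Q}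
    (hp : {n | run n = p}.Nonempty) (hq : {n | run n = q}.Infinite) :
    ∃ u : List A, List.foldl δ p u = q := by
  obtain ⟨m, rfl⟩ := hp
  obtain ⟨n, rfl, hmn⟩ := hq.exists_gt m
  exact exists_foldl_run_eq hrunS hmn.le

theorem Set.Infinite.exists_infinite_inter_fiber [Finite Q] {S : Set ℕ} (hS : S.Infinite)
    (f : ℕ → Q) : ∃ p, {n | n ∈ S ∧ f n = p}.Infinite := by
  by_contra! h
  refine hS ((Set.finite_iUnion h).subset fun n hn => ?_)
  exact Set.mem_iUnion.2 ⟨f n, hn, rfl⟩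

theorem infinite_setOf_eq_of_shift {f : ℕ → Q} {S : Set ℕ} (hS : S.Infinite) {k : ℕ} {r : Q}
    (h : ∀ n ∈ S, f (n + k) = r) : {n | f n = r}.Infinite :=
  (hS.image (add_left_injective k).injOn).mono <| by
    rintro _ ⟨n, hn, rfl⟩
    exact h n hn

theorem infinite_setOf_run_eq_foldl (hrunS : ∀ n, run (n + 1) = δ (run n) (α n))
    {w u : List A} {p : Q} (hw : {n | OccursAt α w n ∧ run n = p}.Infinite) (hu : u <+: w) :
    {n | run n = List.foldl δ p u}.Infinite :=
  infinite_setOf_eq_of_shift hw fun _ ⟨hocc, hp⟩ => by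
    rw [run_add_length hrunS (hocc.of_prefix hu), hp]

end Run

theorem List.exists_forall_of_forall_exists_append {ι A : Type*} [Finite ι]
    (P : ι → List A → Prop) (hmono : ∀ i w v, P i w → P i (w ++ v))
    (hext : ∀ i w, ∃ v, P i (w ++ v)) : ∃ w, ∀ i, P i w := by
  classical
  have := Fintype.ofFinite ι
  suffices ∀ s : Finset ι, ∃ w, ∀ i ∈ s, P i w by simpa using this Finset.univ
  intro s
  induction s using Finset.induction_on with
  | empty => exact ⟨[], by simp⟩
  | insert i s _ ih =>
    obtain ⟨w, hw⟩ := ih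
    obtain ⟨v, hv⟩ := hext i w
    refine ⟨w ++ v, fun j hj => ?_⟩
    rcases Finset.mem_insert.mp hj with rfl | hj
    · exact hv
    · exact hmono j w v (hw j hj)

theorem delta_mem_setOf_infinite {A Q : Type*} [Finite Q] {δ : Q → A → Q} {α : ℕ → A}
    {run : ℕ → Q} (hdisj : ∀ w : List A, {n | OccursAt α w n}.Infinite)
    (hrunS : ∀ n, run (n + 1) = δ (run n) (α n)) {q : Q} (hq : {n | run n = q}.Infinite)
    (a : A) : {n | run n = δ q a}.Infinite := by
  let Recurs (w : List A) (p : Q) : Prop := {n | OccursAt α w n ∧ run n = p}.Infinite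
  let Hits (w : List A) (p : Q) : Prop := ∃ u, u ++ [a] <+: w ∧ List.foldl δ p u = q
  have recurs_of_append {w v p} (h : Recurs (w ++ v) p) : Recurs w p :=
    h.mono fun n hn => ⟨hn.1.of_prefix (List.prefix_append w v), hn.2⟩
  obtain ⟨w, hw⟩ : ∃ w, ∀ p, Recurs w p → Hits w p := by
    refine List.exists_forall_of_forall_exists_append _
      (fun p w v h hr => ?_) (fun p w => ?_)
    · obtain ⟨u, hu, hpu⟩ := h (recurs_of_append hr)
      exact ⟨u, hu.trans (List.prefix_append w v), hpu⟩
    by_cases hr : Recurs w p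
    · obtain ⟨v, hv⟩ := exists_foldl_eq_of_infinite hrunS
        (infinite_setOf_run_eq_foldl hrunS hr (List.prefix_refl w)).nonempty hq
      exact ⟨v ++ [a], fun _ => ⟨w ++ v, by simp, by rw [List.foldl_append, hv]⟩⟩
    · exact ⟨[], fun h => absurd (by simpa using h) hr⟩
  obtain ⟨p, hp⟩ := (hdisj w).exists_infinite_inter_fiber run
  obtain ⟨u, hu, hpu⟩ := hw p hp
  simpa [hpu] using infinite_setOf_run_eq_foldl hrunS hp hu

theorem run_on_disjunctive_word_inf_states_general
    (A : Type*) (Q : Type*) [Fintype Q]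
    (δ : Q → A → Q) (α : ℕ → A)
    (hdisj : ∀ w : List A,
      {n : ℕ | ∀ (k : ℕ) (hk : k < w.length), α (n + k) = w[k]'hk}.Infinite)
    (run : ℕ → Q)
    (hrunS : ∀ n, run (n + 1) = δ (run n) (α n))
    (I : Set Q) (hI : I = {q : Q | {n : ℕ | run n = q}.Infinite}) :
    I.Nonempty ∧
    (∀ q ∈ I, ∀ a : A, δ q a ∈ I) ∧
    (∀ p ∈ I, ∀ q ∈ I, ∃ u : List A, List.foldl δ p u = q) := by
  subst hI
  refine ⟨?_, fun q hq a => delta_mem_setOf_infinite hdisj hrunS hq a,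
    fun p hp q hq => exists_foldl_eq_of_infinite hrunS hp.nonempty hq⟩
  obtain ⟨p, hp⟩ := Set.infinite_univ.exists_infinite_inter_fiber run
  exact ⟨p, by simpa using hp⟩

/-- The set of states visited infinitely often by the run of a deterministic
automaton on a disjunctive word is nonempty, closed under all transitions, and
strongly connected (i.e., it is a bottom SCC). -/
theorem run_on_disjunctive_word_inf_states
    (A : Type*) (Q : Type*) [Fintype Q]
    (δ : Q → A → Q) (q₀ : Q) (α : ℕ → A)
    (hdisj : ∀ w : List A,
      {n : ℕ | ∀ (k : ℕ) (hk : k < w.length), α (n + k) = w[k]'hk}.Infinite)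
    (run : ℕ → Q) (hrun0 : run 0 = q₀)
    (hrunS : ∀ n, run (n + 1) = δ (run n) (α n))
    (I : Set Q) (hI : I = {q : Q | {n : ℕ | run n = q}.Infinite}) :
    I.Nonempty ∧
    (∀ q ∈ I, ∀ a : A, δ q a ∈ I) ∧
    (∀ p ∈ I, ∀ q ∈ I, ∃ u : List A, List.foldl δ p u = q) :=
  run_on_disjunctive_word_inf_states_general A Q δ α hdisj run hrunS I hI
end

section
/- Let A be a type, Q a finite type, δ : Q → A → Q, and let S ⊆ Q be a nonempty set of states that is: (i) strongly connected (for all p, q ∈ S there exists u : List A with List.foldl δ p u = q); (ii) maximal, i.e., for every state q ∉ S it is not the case that q is reachable from some p ∈ S and p is reachable from q (reachable meaning via reading some finite word); and (iii) not bottom: there exist q ∈ S and a ∈ A with δ q a ∉ S. Then there exists a single finite word u : List A such that for every q ∈ S, List.foldl δ q u ∉ S. -/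
/-- For a non-bottom strongly connected component `S` of a deterministic
automaton's transition graph, there is a single finite word driving every
state of `S` out of `S`. -/
theorem exists_word_exiting_non_bottom_scc
    (A : Type*) (Q : Type*) [Fintype Q]
    (δ : Q → A → Q) (S : Set Q) (hne : S.Nonempty)
    (hconn : ∀ p ∈ S, ∀ q ∈ S, ∃ u : List A, List.foldl δ p u = q)
    (hmax : ∀ q ∉ S, ¬ ∃ p ∈ S,
      (∃ u : List A, List.foldl δ p u = q) ∧ (∃ v : List A, List.foldl δ q v = p))
    (hnotbottom : ∃ q ∈ S, ∃ a : A, δ q a ∉ S) :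
    ∃ u : List A, ∀ q ∈ S, List.foldl δ q u ∉ S := by
  classical
  -- once out of S, never back in S
  have stay : ∀ q ∈ S, ∀ u v : List A,
      List.foldl δ q u ∉ S → List.foldl δ q (u ++ v) ∉ S := by
    intro q hq u v hout hin
    rw [List.foldl_append] at hin
    set r := List.foldl δ q u with hr
    exact hmax r hout ⟨q, hq, ⟨u, rfl⟩,
      by
        obtain ⟨w, hw⟩ := hconn _ hin q hq
        exact ⟨v ++ w, by rw [List.foldl_append, hw]⟩⟩
  -- every state of S has an exiting word
  have exit : ∀ q ∈ S, ∃ w : List A, List.foldl δ q w ∉ S := by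
    intro q hq
    obtain ⟨q0, hq0, a, ha⟩ := hnotbottom
    obtain ⟨u, hu⟩ := hconn q hq q0 hq0
    exact ⟨u ++ [a], by simpa [List.foldl_append, hu] using ha⟩
  -- combine over a finset of states
  have key : ∀ T : Finset Q, ∃ u : List A, ∀ q ∈ S, q ∈ T → List.foldl δ q u ∉ S := by
    intro T
    induction T using Finset.induction with
    | empty => exact ⟨[], by simp⟩
    | @insert x T' hx ih =>
      obtain ⟨u, hu⟩ := ih
      by_cases hxS : x ∈ S
      · by_cases hr : List.foldl δ x u ∈ S
        · obtain ⟨w, hw⟩ := exit _ hr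
          refine ⟨u ++ w, ?_⟩
          intro q hq hqT
          rcases Finset.mem_insert.mp hqT with rfl | hqT'
          · rw [List.foldl_append]; exact hw
          · exact stay q hq u w (hu q hq hqT')
        · refine ⟨u, ?_⟩
          intro q hq hqT
          rcases Finset.mem_insert.mp hqT with rfl | hqT'
          · exact hr
          · exact hu q hq hqT'
      · refine ⟨u, ?_⟩
        intro q hq hqT
        rcases Finset.mem_insert.mp hqT with rfl | hqT'
        · exact absurd hq hxS
        · exact hu q hq hqT'
  obtain ⟨u, hu⟩ := key Finset.univ
  exact ⟨u, fun q hq => hu q hq (Finset.mem_univ q)⟩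
end

section
/- Let A be a type, Q a finite type, δ : Q → A → Q, and let S ⊆ Q be a nonempty set of states that is closed under all transitions (for every p ∈ S and a ∈ A, δ p a ∈ S) and strongly connected (for all p, q ∈ S there exists u : List A with List.foldl δ p u = q). Then for every q ∈ S there exists a finite word u : List A such that for every p ∈ S, the run from p on u visits q: there exists k ≤ |u| with List.foldl δ p (List.take k u) = q. -/
/-- For a bottom strongly connected component `S` (nonempty, closed under all
transitions, strongly connected) and any target state `q ∈ S`, there is a
single finite word whose reading from any state of `S` visits `q`. -/
theorem exists_word_visiting_state_in_bottom_scc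
    (A : Type*) (Q : Type*) [Fintype Q]
    (δ : Q → A → Q) (S : Set Q) (hne : S.Nonempty)
    (hclosed : ∀ p ∈ S, ∀ a : A, δ p a ∈ S)
    (hconn : ∀ p ∈ S, ∀ q ∈ S, ∃ u : List A, List.foldl δ p u = q) :
    ∀ q ∈ S, ∃ u : List A, ∀ p ∈ S,
      ∃ k ≤ u.length, List.foldl δ p (List.take k u) = q := by
  classical
  intro q hq
  have hfold : ∀ (u : List A) (p : Q), p ∈ S → List.foldl δ p u ∈ S := by
    intro u
    induction u with
    | nil => intro p hp; exact hp
    | cons a t ih => intro p hp; exact ih _ (hclosed p hp a)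
  -- main induction over a list of states
  have key : ∀ L : List Q, ∃ u : List A, ∀ p ∈ L, p ∈ S →
      ∃ k ≤ u.length, List.foldl δ p (List.take k u) = q := by
    intro L
    induction L with
    | nil => exact ⟨[], by simp⟩
    | cons p L ih =>
      obtain ⟨u, hu⟩ := ih
      by_cases hp : p ∈ S
      · obtain ⟨v, hv⟩ := hconn (List.foldl δ p u) (hfold u p hp) q hq
        refine ⟨u ++ v, ?_⟩
        intro r hr hrS
        rcases List.mem_cons.mp hr with h | h
        · subst h
          refine ⟨(u ++ v).length, le_refl _, ?_⟩
          rw [List.take_length, List.foldl_append]; exact hv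
        · obtain ⟨k, hk, hkf⟩ := hu r h hrS
          refine ⟨k, le_trans hk (by simp), ?_⟩
          rwa [List.take_append_of_le_length hk]
      · refine ⟨u, ?_⟩
        intro r hr hrS
        rcases List.mem_cons.mp hr with h | h
        · exact absurd (h ▸ hrS) hp
        · exact hu r h hrS
  obtain ⟨u, hu⟩ := key (Finset.univ : Finset Q).toList
  exact ⟨u, fun p hp => hu p (by simp) hp⟩
end

section
/- Let d be a natural number, c : Fin d → ℂ, and let u : ℕ → ℂ satisfy the linear recurrence u(n + d) = Σ_{i < d} c(i)·u(n + i) for all n ∈ ℕ. Let L, r be real numbers with r > 0 and L > 0, and assume every complex root of the characteristic polynomial is of modulus less than L, i.e., every z ∈ ℂ with z^d = Σ_{i < d} c(i)·z^i satisfies |z| < L. Then there exists N ∈ ℕ such that |u(n)| ≤ r·L^n for all n ≥ N. -/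
/-!
The windows `(u (n + i))_{i < d}` of a solution are the iterates `Tⁿ w₀` of the companion
operator `T` of the recurrence. An eigenvector of `T` is the initial window of a geometric
solution, so every eigenvalue of `T` is a characteristic root. Hence the spectral radius of `T`
is `< L`, Gelfand's formula gives `‖Tⁿ‖ = o(Lⁿ)`, and so `u n = o(Lⁿ)`.
-/

open Filter Asymptotics
open scoped NNReal ENNReal

namespace spectrum

variable {A : Type*} [NormedRing A] [NormedAlgebra ℂ A] [CompleteSpace A]

theorem eventually_norm_pow_le_of_spectralRadius_lt {a : A} {ℓ : ℝ≥0}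
    (h : spectralRadius ℂ a < ℓ) : ∀ᶠ n : ℕ in atTop, ‖a ^ n‖ ≤ (ℓ : ℝ) ^ n := by
  filter_upwards [(pow_nnnorm_pow_one_div_tendsto_nhds_spectralRadius a).eventually_lt_const h,
    eventually_gt_atTop 0] with n hn hn0
  rw [one_div, ENNReal.rpow_inv_lt_iff (by positivity), ENNReal.rpow_natCast,
    ← ENNReal.coe_pow, ENNReal.coe_lt_coe] at hn
  exact_mod_cast hn.le

theorem isLittleO_pow_of_spectralRadius_lt {a : A} {L : ℝ}
    (h : spectralRadius ℂ a < ENNReal.ofReal L) :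
    (fun n : ℕ => a ^ n) =o[atTop] fun n => L ^ n := by
  obtain ⟨ℓ, haℓ, hℓL⟩ := ENNReal.lt_iff_exists_nnreal_btwn.mp h
  have hbig : (fun n : ℕ => a ^ n) =O[atTop] fun n => (ℓ : ℝ) ^ n :=
    IsBigO.of_bound' <| (eventually_norm_pow_le_of_spectralRadius_lt haℓ).mono fun n hn => by
      simpa using hn
  exact hbig.trans_isLittleO (isLittleO_pow_pow_of_lt_left ℓ.2 (ENNReal.coe_lt_ofReal.mp hℓL))

end spectrum

namespace LinearRecurrence

section CommRing

variable {R : Type*} [CommRing R] {E : LinearRecurrence R}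

theorem isRoot_charPoly_iff (E : LinearRecurrence R) (z : R) :
    E.charPoly.IsRoot z ↔ z ^ E.order = ∑ i, E.coeffs i * z ^ (i : ℕ) := by
  simp [charPoly, Polynomial.eval_finsetSum, sub_eq_zero]

theorem IsSolution.tupleSucc_window {u : ℕ → R} (hu : E.IsSolution u) (n : ℕ) :
    E.tupleSucc (fun i => u (n + i)) = fun i : Fin E.order => u (n + 1 + i) := by
  ext i
  simp only [tupleSucc, LinearMap.coe_mk, AddHom.coe_mk]
  split_ifs with h
  · simp only [add_assoc, add_comm 1]
  · rw [show n + 1 + i = n + E.order by omega, hu n]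

theorem IsSolution.tupleSucc_pow_window {u : ℕ → R} (hu : E.IsSolution u) (n : ℕ) :
    (E.tupleSucc ^ n) (fun i => u i) = fun i : Fin E.order => u (n + i) := by
  induction n with
  | zero => simp
  | succ n ih => rw [pow_succ', Module.End.mul_apply, ih, hu.tupleSucc_window]

end CommRing

theorem isRoot_charPoly_of_hasEigenvalue {R : Type*} [CommRing R] [IsDomain R]
    (E : LinearRecurrence R) {z : R} (hz : Module.End.HasEigenvalue E.tupleSucc z) :
    E.charPoly.IsRoot z := by
  obtain ⟨v, hv⟩ := hz.exists_hasEigenvector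
  have hsol := E.is_sol_mkSol v
  have hpos : 0 < E.order :=
    Nat.pos_of_ne_zero fun h0 => hv.2 (funext fun i => absurd i.2 (by omega))
  set i₀ : Fin E.order := ⟨0, hpos⟩
  have hgeom (n : ℕ) : E.mkSol v n = z ^ n * v i₀ := by
    have h := congrFun (hsol.tupleSucc_pow_window n) i₀
    rw [funext (E.mkSol_eq_init v), hv.pow_apply] at h
    simpa [i₀] using h.symm
  have hv₀ : v i₀ ≠ 0 := by
    intro h
    apply hv.2
    ext i
    rw [← E.mkSol_eq_init v i, hgeom, h, mul_zero, Pi.zero_apply]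
  rw [isRoot_charPoly_iff]
  have hrec := hsol 0
  simp only [hgeom, zero_add] at hrec
  apply mul_right_cancel₀ hv₀
  rw [hrec, Finset.sum_mul]
  exact Finset.sum_congr rfl fun i _ => by ring

theorem IsSolution.isLittleO_pow {E : LinearRecurrence ℂ} {u : ℕ → ℂ} (hu : E.IsSolution u)
    {L : ℝ} (hroots : ∀ z, E.charPoly.IsRoot z → ‖z‖ < L) :
    u =o[atTop] fun n => L ^ n := by
  rcases Nat.eq_zero_or_pos E.order with h0 | hpos
  · have : IsEmpty (Fin E.order) := h0 ▸ Fin.isEmpty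
    have hu0 : u = 0 := funext fun n => by simpa [h0] using hu n
    exact hu0 ▸ isLittleO_zero _ _
  have : Nonempty (Fin E.order) := ⟨⟨0, hpos⟩⟩
  set T := Module.End.toContinuousLinearMap (Fin E.order → ℂ) E.tupleSucc
  have hspec : spectralRadius ℂ T < ENNReal.ofReal L := by
    refine spectrum.spectralRadius_lt_of_forall_lt T fun z hz => ?_
    rw [AlgEquiv.spectrum_eq, ← Module.End.hasEigenvalue_iff_mem_spectrum] at hz
    exact Real.lt_toNNReal_iff_coe_lt.mpr (hroots z (E.isRoot_charPoly_of_hasEigenvalue hz))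
  set w₀ : Fin E.order → ℂ := fun i => u i
  have hwindow : u =O[atTop] fun n => T ^ n := by
    refine IsBigO.of_bound ‖w₀‖ (Eventually.of_forall fun n => ?_)
    have h := congrFun (hu.tupleSucc_pow_window n) ⟨0, hpos⟩
    have hT : T ^ n = Module.End.toContinuousLinearMap _ (E.tupleSucc ^ n) :=
      (map_pow _ _ _).symm
    calc ‖u n‖ = ‖(T ^ n) w₀ ⟨0, hpos⟩‖ := by rw [hT]; exact congrArg norm h.symm
      _ ≤ ‖(T ^ n) w₀‖ := norm_le_pi_norm _ _
      _ ≤ ‖w₀‖ * ‖T ^ n‖ := by rw [mul_comm]; exact (T ^ n).le_opNorm w₀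
  exact hwindow.trans_isLittleO (spectrum.isLittleO_pow_of_spectralRadius_lt hspec)

end LinearRecurrence

/-- An LRS over `ℂ` all of whose characteristic roots have modulus below `L`
is eventually bounded by `r·L^n` for any `r > 0`. -/
theorem lrs_growth_bound
    (d : ℕ) (c : Fin d → ℂ) (u : ℕ → ℂ)
    (hrec : ∀ n : ℕ, u (n + d) = ∑ i : Fin d, c i * u (n + (i : ℕ)))
    (L r : ℝ) (hr : 0 < r) (hL : 0 < L)
    (hroots : ∀ z : ℂ, z ^ d = ∑ i : Fin d, c i * z ^ (i : ℕ) → ‖z‖ < L) :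
    ∃ N : ℕ, ∀ n ≥ N, ‖u n‖ ≤ r * L ^ n := by
  let E : LinearRecurrence ℂ := ⟨d, c⟩
  have hsol : E.IsSolution u := hrec
  have hE (z : ℂ) (hz : E.charPoly.IsRoot z) : ‖z‖ < L :=
    hroots z ((E.isRoot_charPoly_iff z).mp hz)
  obtain ⟨N, hN⟩ := eventually_atTop.mp ((hsol.isLittleO_pow hE).bound hr)
  exact ⟨N, fun n hn => by simpa [abs_of_pos hL] using hN n hn⟩
end

section
/- Let d be a natural number, c : Fin d → ℤ, and let u : ℕ → ℤ satisfy u(n + d) = Σ_{i < d} c(i)·u(n + i) for all n ∈ ℕ. Then for every integer m ≥ 1 there exist N ∈ ℕ and p ∈ ℕ with p > 0 such that u(n + p) ≡ u(n) (mod m) for all n ≥ N. -/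
/-- Every integer linear recurrence sequence is ultimately periodic modulo
every positive integer `m` (procyclicity). -/
theorem lrs_ultimately_periodic_mod
    (d : ℕ) (c : Fin d → ℤ) (u : ℕ → ℤ)
    (hrec : ∀ n : ℕ, u (n + d) = ∑ i : Fin d, c i * u (n + (i : ℕ))) :
    ∀ m : ℤ, 1 ≤ m → ∃ N p : ℕ, 0 < p ∧ ∀ n ≥ N, u (n + p) ≡ u n [ZMOD m] := by
  intro m hm
  have hM : (0 : ℕ) < m.natAbs := by
    have : m ≠ 0 := by omega
    exact Int.natAbs_pos.mpr this
  haveI : NeZero m.natAbs := ⟨hM.ne'⟩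
  -- state map
  set f : ℕ → (Fin d → ZMod m.natAbs) := fun n i => ((u (n + (i : ℕ)) : ℤ) : ZMod m.natAbs)
    with hf
  obtain ⟨a, b, hab, hfab⟩ := Finite.exists_ne_map_eq_of_infinite f
  wlog hlt : a < b generalizing a b
  · exact this b a hab.symm hfab.symm (by omega)
  -- congruence mod m from equality in ZMod
  have key : ∀ k : ℕ, u (a + k) ≡ u (b + k) [ZMOD m] := by
    intro k
    induction k using Nat.strong_induction_on with
    | _ k ih =>
      rcases lt_or_ge k d with hk | hk
      · have := congrFun hfab ⟨k, hk⟩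
        simp only [hf] at this
        have h2 : u (a + k) ≡ u (b + k) [ZMOD (m.natAbs : ℤ)] :=
          (ZMod.intCast_eq_intCast_iff' _ _ _).mp this
        have hdvd : ((m.natAbs : ℤ)) ∣ (u (b + k) - u (a + k)) := Int.ModEq.dvd h2
        rw [Int.natAbs_dvd] at hdvd
        exact Int.modEq_iff_dvd.mpr hdvd
      · obtain ⟨j, rfl⟩ : ∃ j, k = j + d := ⟨k - d, by omega⟩
        have ha : a + (j + d) = (a + j) + d := by ring
        have hb : b + (j + d) = (b + j) + d := by ring
        rw [ha, hb, hrec, hrec, Int.modEq_iff_dvd, ← Finset.sum_sub_distrib]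
        refine Finset.dvd_sum fun i _ => ?_
        have h1 : (a + j) + (i : ℕ) = a + (j + (i : ℕ)) := by ring
        have h2 : (b + j) + (i : ℕ) = b + (j + (i : ℕ)) := by ring
        rw [h1, h2, ← mul_sub]
        exact Dvd.dvd.mul_left (Int.ModEq.dvd (ih (j + (i : ℕ)) (by omega))) _
  refine ⟨a, b - a, by omega, fun n hn => ?_⟩
  have h1 : n + (b - a) = b + (n - a) := by omega
  have h2 : n = a + (n - a) := by omega
  rw [h1]
  conv_rhs => rw [h2]
  exact (key (n - a)).symm
end

section
/- Let d ≥ 1 and let r, ρ : Fin d → ℝ satisfy r(i) > 0 and ρ(i) > 1 for all i. Assume: (distinctness) for all i ≠ j and all n, m ∈ ℕ, r(i)·ρ(i)^n ≠ r(j)·ρ(j)^m; and (interleaving) for all i, j ∈ Fin d and all n ∈ ℕ there exists m ∈ ℕ with r(i)·ρ(i)^n ≤ r(j)·ρ(j)^m < ρ(j)·(r(i)·ρ(i)^n). Let S := {x ∈ ℝ : ∃ i n, x = r(i)·ρ(i)^n}, let t : ℕ → ℝ be a strictly increasing function whose range is S, and let w : ℕ → Fin d be such that for every k ∈ ℕ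 there exists n ∈ ℕ with t(k) = r(w(k))·ρ(w(k))^n. Then w is uniformly recurrent: for every ℓ ∈ ℕ there exists R ∈ ℕ such that for all p, q ∈ ℕ there exists p' with q ≤ p', p' + ℓ ≤ q + R, and w(p' + j) = w(p + j) for all j < ℓ. -/
/-!
Taking logarithms turns the geometric sequences into arithmetic progressions `a j + n * s j` and
`w` into the order word of their union `S`. Suppose integers `m j ≥ 0` make all the `m j * s j`
within `ε` of a common `c`. Moving each point of progression `j` up by `m j * s j` maps `S` into
itself, stays within `ε` of the translation by `c`, and hits every point of `S` beyond `min S + c`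
(here interleaving enters: no progression starts more than one step above `min S`). Such a map
sends consecutive points of `S` to consecutive points as long as they are `2ε`-isolated, so it
copies any given factor of `w`. By pigeonhole on the torus `∏ j, ℝ / s j ℤ` (the easy half of
Kronecker's theorem) admissible `m` exist for `c = ν * s (w p)` with `ν` in a syndetic set, and
this makes the occurrences of the factor at position `p` syndetic. As there are finitely many
factors of each length, the gap bound can be made uniform in `p`.
-/

open Finset

def UniformlyRecurrent {α : Type*} (w : ℕ → α) : Prop :=
  ∀ ℓ : ℕ, ∃ R : ℕ, ∀ p q : ℕ, ∃ p' : ℕ,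
    q ≤ p' ∧ p' + ℓ ≤ q + R ∧ ∀ j < ℓ, w (p' + j) = w (p + j)

theorem Finite.exists_forall_exists_le_eq {α : Type*} [Finite α] (f : ℕ → α) :
    ∃ G, ∀ n, ∃ m ≤ G, f m = f n := by
  choose g hg using fun x : Set.range f => x.2
  obtain ⟨G, hG⟩ := (Set.toFinite (Set.range g)).bddAbove
  exact ⟨G, fun n => ⟨g ⟨f n, n, rfl⟩, hG ⟨_, rfl⟩, hg _⟩⟩

theorem uniformlyRecurrent_of_forall_syndetic {α : Type*} [Finite α] {w : ℕ → α}
    (h : ∀ ℓ p : ℕ, ∃ R : ℕ, ∀ q : ℕ, ∃ p' : ℕ,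
      q ≤ p' ∧ p' + ℓ ≤ q + R ∧ ∀ j < ℓ, w (p' + j) = w (p + j)) :
    UniformlyRecurrent w := by
  intro ℓ
  choose R hR using h ℓ
  obtain ⟨G, hG⟩ := Finite.exists_forall_exists_le_eq fun p (j : Fin ℓ) => w (p + j)
  refine ⟨(range (G + 1)).sup R, fun p q => ?_⟩
  obtain ⟨p₀, hp₀G, hp₀⟩ := hG p
  obtain ⟨p', hqp', hp'R, hp'⟩ := hR p₀ q
  have : R p₀ ≤ (range (G + 1)).sup R := le_sup (mem_range.2 (Nat.lt_succ_of_le hp₀G))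
  exact ⟨p', hqp', by omega, fun j hj => (hp' j hj).trans (congrFun hp₀ ⟨j, hj⟩)⟩

theorem abs_sub_sub_floor_sub_lt_of_floor_fract_mul_eq {x y M : ℝ} (hM : 0 < M)
    (h : ⌊Int.fract x * M⌋₊ = ⌊Int.fract y * M⌋₊) :
    |x - y - (⌊x⌋ - ⌊y⌋)| < 1 / M := by
  have hfloor : ⌊Int.fract x * M⌋ = ⌊Int.fract y * M⌋ := by
    rw [← Int.natCast_floor_eq_floor (by positivity),
      ← Int.natCast_floor_eq_floor (by positivity), h]
  have h1 := Int.abs_sub_lt_one_of_floor_eq_floor hfloor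
  rw [← sub_mul, abs_mul, abs_of_pos hM, ← lt_div_iff₀ hM] at h1
  rwa [show x - y - (⌊x⌋ - ⌊y⌋) = Int.fract x - Int.fract y by unfold Int.fract; ring]

theorem exists_syndetic_simultaneous_approx {ι : Type*} [Finite ι] (x δ : ι → ℝ)
    (hδ : ∀ j, 0 < δ j) :
    ∃ G : ℕ, ∀ N : ℕ, ∃ ν, N ≤ ν ∧ ν ≤ N + G ∧ ∀ j, ∃ z : ℤ, |ν * x j - z| < δ j := by
  choose M hM using fun j => exists_nat_one_div_lt (hδ j)
  -- Two times with the same `box` differ by a `ν` with each `ν * x j` near an integer.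
  let box : ℕ → (j : ι) → Fin (M j + 1) := fun n j =>
    ⟨⌊Int.fract (n * x j) * (M j + 1)⌋₊, (Nat.floor_lt (by positivity)).2 <| by
      push_cast
      nlinarith [Int.fract_lt_one (n * x j)]⟩
  obtain ⟨G, hG⟩ := Finite.exists_forall_exists_le_eq box
  refine ⟨G, fun N => ?_⟩
  obtain ⟨m, hmG, hm⟩ := hG (N + G)
  refine ⟨N + G - m, by omega, by omega, fun j => ⟨⌊(N + G : ℕ) * x j⌋ - ⌊m * x j⌋, ?_⟩⟩
  have h := abs_sub_sub_floor_sub_lt_of_floor_fract_mul_eq (Nat.cast_add_one_pos (M j))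
    (congrArg Fin.val (congrFun hm j)).symm
  push_cast [Nat.cast_sub (hmG.trans (Nat.le_add_left G N))] at h ⊢
  rw [sub_mul]
  exact h.trans (hM j)

theorem StrictMono.exists_pos_forall_abs_sub_lt {u : ℕ → ℝ} (hu : StrictMono u) (N : ℕ) :
    ∃ δ > 0, ∀ k ≤ N, ∀ k', |u k' - u k| < δ → k' = k := by
  obtain ⟨k₀, -, hk₀⟩ :=
    (range (N + 1)).exists_min_image (fun k => u (k + 1) - u k) nonempty_range_add_one
  refine ⟨u (k₀ + 1) - u k₀, sub_pos.2 (hu k₀.lt_succ_self), fun k hk k' hk' => ?_⟩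
  by_contra hne
  rcases lt_or_gt_of_ne hne with h | h
  · have hgap := hk₀ (k - 1) (mem_range.2 (by omega))
    have hk'k : u k' ≤ u (k - 1) := hu.monotone (by omega)
    rw [Nat.sub_add_cancel (by omega : 1 ≤ k)] at hgap
    rw [abs_sub_comm, abs_of_pos (sub_pos.2 (hu h))] at hk'
    linarith
  · have hgap := hk₀ k (mem_range.2 (by omega))
    have hk'k : u (k + 1) ≤ u k' := hu.monotone h
    rw [abs_of_pos (sub_pos.2 (hu h))] at hk'
    linarith

theorem exists_syndetic_index {K : ℕ → ℕ} {D G : ℕ} {P : ℕ → Prop} (hK : StrictMono K)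
    (hstep : ∀ ν, K (ν + 1) ≤ K ν + D) (hP : ∀ N, ∃ ν, N ≤ ν ∧ ν ≤ N + G ∧ P ν) (q : ℕ) :
    ∃ ν, P ν ∧ q ≤ K ν ∧ K ν ≤ q + K 0 + (G + 1) * D := by
  have hadd : ∀ ν n, K (ν + n) ≤ K ν + n * D := by
    intro ν n
    induction n with
    | zero => simp
    | succ n ih => have := hstep (ν + n); rw [← add_assoc, add_one_mul]; omega
  have hex : ∃ ν, q ≤ K ν := ⟨q, hK.id_le q⟩
  have hν₀ : K (Nat.find hex) ≤ q + K 0 + D := by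
    rcases Nat.eq_zero_or_pos (Nat.find hex) with h | h
    · rw [h]; omega
    · have hlt := Nat.find_min hex (Nat.sub_lt h one_pos)
      have := hstep (Nat.find hex - 1)
      rw [Nat.sub_add_cancel h] at this
      omega
  obtain ⟨ν, h₁, h₂, hPν⟩ := hP (Nat.find hex)
  have hK_le := hadd (Nat.find hex) (ν - Nat.find hex)
  rw [Nat.add_sub_cancel' h₁] at hK_le
  have : (ν - Nat.find hex) * D ≤ G * D := Nat.mul_le_mul_right _ (by omega)
  exact ⟨ν, hPν, (Nat.find_spec hex).trans (hK.monotone h₁), by rw [add_one_mul]; omega⟩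

theorem exists_nat_abs_mul_sub_lt {s c ε : ℝ} {z : ℤ} (hs : 0 < s) (hc : 0 ≤ c) (hεs : ε ≤ s)
    (h : |c / s - z| < ε / s) : ∃ n : ℕ, |n * s - c| < ε := by
  have h' : |z * s - c| < ε := by
    rwa [abs_sub_comm, lt_div_iff₀ hs, ← abs_of_pos hs, ← abs_mul, abs_of_pos hs, sub_mul,
      div_mul_cancel₀ _ hs.ne'] at h
  have hz : 0 ≤ z := by
    have : ((-1 : ℤ) : ℝ) < z := by push_cast; nlinarith [abs_lt.1 h']
    exact Int.lt_iff_add_one_le.1 (Int.cast_lt.1 this)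
  exact ⟨z.toNat, by rwa [← Int.cast_natCast, Int.toNat_of_nonneg hz]⟩

theorem Nat.eq_of_abs_mul_sub_mul_lt {m n : ℕ} {s ε : ℝ} (hεs : ε ≤ s)
    (h : |m * s - n * s| < ε) : m = n := by
  have h' := abs_lt.1 h
  rcases lt_trichotomy m n with hlt | heq | hgt
  · have : (m : ℝ) + 1 ≤ n := by exact_mod_cast hlt
    nlinarith
  · exact heq
  · have : (n : ℝ) + 1 ≤ m := by exact_mod_cast hgt
    nlinarith

theorem eq_shift_succ_of_eq_shift {u f : ℕ → ℝ} {c ε : ℝ} (hu : StrictMono u)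
    (hf_mem : ∀ k, ∃ K, u K = f k) (hf_close : ∀ k, |f k - (u k + c)| < ε)
    (hf_cover : ∀ K, u 0 + c - ε ≤ u K → ∃ k, f k = u K) {k K : ℕ}
    (hk : ∀ k', |u k' - u k| ≤ 2 * ε → k' = k)
    (hk₁ : ∀ k', |u k' - u (k + 1)| ≤ 2 * ε → k' = k + 1)
    (hK : u K = f k) : u (K + 1) = f (k + 1) := by
  have h₀ := abs_lt.1 (hf_close k)
  have h₁ := abs_lt.1 (hf_close (k + 1))
  have hgap : 2 * ε < u (k + 1) - u k := by
    by_contra! h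
    have := hk (k + 1) (by rw [abs_of_pos (sub_pos.2 (hu k.lt_succ_self))]; exact h)
    omega
  obtain ⟨K', hK'⟩ := hf_mem (k + 1)
  have hKK' : K < K' := hu.lt_iff_lt.1 (by linarith)
  by_contra hne
  have hz₀ : f k < u (K + 1) := hK ▸ hu K.lt_succ_self
  have hK₁K' : K + 1 < K' := (Nat.succ_le_of_lt hKK').lt_of_ne fun h => hne (by rw [← hK', ← h])
  have hz₁ : u (K + 1) < f (k + 1) := hK' ▸ hu hK₁K'
  obtain ⟨k', hk'⟩ := hf_cover (K + 1) (by linarith [hu.monotone (Nat.zero_le k)])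
  have h' := abs_lt.1 (hf_close k')
  rcases le_or_gt k' k with h | h
  · have := hk k' (abs_le.2 ⟨by linarith, by linarith [hu.monotone h]⟩)
    subst this
    linarith
  · have := hk₁ k' (abs_le.2 ⟨by linarith [hu.monotone (Nat.succ_le_of_lt h)], by linarith⟩)
    subst this
    exact hne hk'.symm

theorem eq_shift_add_of_eq_shift {u f : ℕ → ℝ} {c ε : ℝ} (hu : StrictMono u)
    (hf_mem : ∀ k, ∃ K, u K = f k) (hf_close : ∀ k, |f k - (u k + c)| < ε)
    (hf_cover : ∀ K, u 0 + c - ε ≤ u K → ∃ k, f k = u K) {p ℓ K : ℕ}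
    (hiso : ∀ i ≤ ℓ, ∀ k, |u k - u (p + i)| ≤ 2 * ε → k = p + i)
    (hK : u K = f p) : ∀ i ≤ ℓ, u (K + i) = f (p + i) := by
  intro i
  induction i with
  | zero => intro; exact hK
  | succ i ih =>
    intro hi
    exact eq_shift_succ_of_eq_shift hu hf_mem hf_close hf_cover (hiso i (by omega))
      (hiso (i + 1) hi) (ih (by omega))

section Progressions

variable {ι : Type*} {a s : ι → ℝ} {u : ℕ → ℝ} {w : ℕ → ι}

theorem eq_of_eq_add_mul (hdist : ∀ i j, i ≠ j → ∀ n m : ℕ, a i + n * s i ≠ a j + m * s j)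
    (hw : ∀ k, ∃ n : ℕ, u k = a (w k) + n * s (w k)) {k : ℕ} {j : ι} {n : ℕ}
    (h : u k = a j + n * s j) : w k = j := by
  by_contra hne
  obtain ⟨n', hn'⟩ := hw k
  exact hdist _ _ hne n' n (hn'.symm.trans h)

theorem exists_eq_add_mul (hmem : ∀ j (n : ℕ), ∃ k, u k = a j + n * s j)
    (hw : ∀ k, ∃ n : ℕ, u k = a (w k) + n * s (w k)) (k m : ℕ) :
    ∃ K, u K = u k + m * s (w k) := by
  obtain ⟨n, hn⟩ := hw k
  obtain ⟨K, hK⟩ := hmem (w k) (n + m)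
  exact ⟨K, by rw [hK, hn]; push_cast; ring⟩

theorem add_le_add_card [Fintype ι] (hs : ∀ j, 0 < s j) (hu : StrictMono u)
    (hw : ∀ k, ∃ n : ℕ, u k = a (w k) + n * s (w k)) {c : ℝ} (hc : ∀ j, c ≤ s j) (m : ℕ) :
    u m + c ≤ u (m + Fintype.card ι) := by
  obtain ⟨x, y, hxy, hwxy⟩ := Fintype.exists_ne_map_eq_of_card_lt
    (fun i : Fin (Fintype.card ι + 1) => w (m + i)) (by simp)
  wlog hlt : x < y generalizing x y
  · exact this y x hxy.symm hwxy.symm (lt_of_le_of_ne (not_lt.1 hlt) hxy.symm)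
  obtain ⟨n₁, hn₁⟩ := hw (m + x)
  obtain ⟨n₂, hn₂⟩ := hw (m + y)
  rw [hwxy] at hn₁
  have hxy' : u (m + x) < u (m + y) := hu (by simpa using hlt)
  have hn : (n₁ : ℝ) + 1 ≤ n₂ := by
    have : n₁ < n₂ := by
      by_contra! h
      have : (n₂ : ℝ) * s (w (m + y)) ≤ n₁ * s (w (m + y)) :=
        mul_le_mul_of_nonneg_right (by exact_mod_cast h) (hs _).le
      linarith
    exact_mod_cast this
  have h₀ : u m ≤ u (m + x) := hu.monotone (Nat.le_add_right _ _)
  have h₁ : u (m + y) ≤ u (m + Fintype.card ι) := hu.monotone (by omega)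
  nlinarith [hc (w (m + y)), hs (w (m + y))]

theorem lt_add_card_mul_of_lt [Fintype ι] (hs : ∀ j, 0 < s j) (hu : StrictMono u)
    (hw : ∀ k, ∃ n : ℕ, u k = a (w k) + n * s (w k)) {c : ℝ} (hc : ∀ j, c ≤ s j)
    {k k' M : ℕ} (h : u k' < u k + M * c) : k' < k + Fintype.card ι * M := by
  have hgrowth : ∀ M : ℕ, u k + M * c ≤ u (k + Fintype.card ι * M) := by
    intro M
    induction M with
    | zero => simp
    | succ M ih =>
      have := add_le_add_card hs hu hw hc (k + Fintype.card ι * M)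
      rw [mul_add_one, ← add_assoc]
      push_cast
      linarith
  exact hu.lt_iff_lt.1 (h.trans_le (hgrowth M))

theorem apply_add_eq_of_eq_shift (hs : ∀ j, 0 < s j)
    (hdist : ∀ i j, i ≠ j → ∀ n m : ℕ, a i + n * s i ≠ a j + m * s j) (hu : StrictMono u)
    (hmem : ∀ j (n : ℕ), ∃ k, u k = a j + n * s j)
    (hw : ∀ k, ∃ n : ℕ, u k = a (w k) + n * s (w k))
    {m : ι → ℕ} {c ε : ℝ} (hm : ∀ j, |m j * s j - c| < ε)
    (hlow : ∀ j, a j + 2 * ε < u 0 + s j) {p ℓ K : ℕ}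
    (hiso : ∀ i ≤ ℓ, ∀ k, |u k - u (p + i)| ≤ 2 * ε → k = p + i)
    (hK : u K = u p + m (w p) * s (w p)) : ∀ i ≤ ℓ, w (K + i) = w (p + i) := by
  have hcover : ∀ K', u 0 + c - ε ≤ u K' → ∃ k, u k + m (w k) * s (w k) = u K' := by
    intro K' hK'
    obtain ⟨μ, hμ⟩ := hw K'
    have hle : m (w K') ≤ μ := by
      by_contra! hlt
      have : (μ : ℝ) + 1 ≤ m (w K') := by exact_mod_cast hlt
      nlinarith [abs_lt.1 (hm (w K')), hs (w K'), hlow (w K')]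
    obtain ⟨k, hk⟩ := hmem (w K') (μ - m (w K'))
    refine ⟨k, ?_⟩
    rw [eq_of_eq_add_mul hdist hw hk, hk, hμ, Nat.cast_sub hle]
    ring
  intro i hi
  obtain ⟨n, hn⟩ := hw (p + i)
  refine eq_of_eq_add_mul hdist hw (n := n + m (w (p + i))) ?_
  rw [eq_shift_add_of_eq_shift hu (fun k => exists_eq_add_mul hmem hw k _)
    (fun k => by simpa only [add_sub_add_left_eq_sub] using hm (w k)) hcover hiso hK i hi, hn]
  push_cast
  ring

theorem exists_positions_of_progression [Fintype ι] (hs : ∀ j, 0 < s j) (hu : StrictMono u)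
    (hmem : ∀ j (n : ℕ), ∃ k, u k = a j + n * s j)
    (hw : ∀ k, ∃ n : ℕ, u k = a (w k) + n * s (w k)) (p : ℕ) :
    ∃ K : ℕ → ℕ, ∃ D : ℕ, StrictMono K ∧ K 0 = p ∧ (∀ ν, K (ν + 1) ≤ K ν + D) ∧
      ∀ ν : ℕ, u (K ν) = u p + ν * s (w p) := by
  have : Nonempty ι := ⟨w p⟩
  obtain ⟨n₀, hn₀⟩ := hw p
  choose K hK using fun ν : ℕ => hmem (w p) (n₀ + ν)
  have hK' : ∀ ν : ℕ, u (K ν) = u p + ν * s (w p) := fun ν => by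
    rw [hK, hn₀]
    push_cast
    ring
  obtain ⟨j₁, hj₁⟩ := Finite.exists_min s
  obtain ⟨M, hM⟩ := exists_nat_gt (s (w p) / s j₁)
  rw [div_lt_iff₀ (hs j₁)] at hM
  refine ⟨K, Fintype.card ι * M, fun x y hxy => hu.lt_iff_lt.1 ?_, hu.injective ?_,
    fun ν => (lt_add_card_mul_of_lt hs hu hw hj₁ ?_).le, hK'⟩
  · rw [hK', hK']
    nlinarith [hs (w p), (Nat.cast_lt (α := ℝ)).2 hxy]
  · simp [hK']
  · rw [hK', hK']
    push_cast
    linarith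

theorem exists_syndetic_recurrence [Fintype ι] (hs : ∀ j, 0 < s j)
    (hdist : ∀ i j, i ≠ j → ∀ n m : ℕ, a i + n * s i ≠ a j + m * s j) (hu : StrictMono u)
    (hmem : ∀ j (n : ℕ), ∃ k, u k = a j + n * s j)
    (hw : ∀ k, ∃ n : ℕ, u k = a (w k) + n * s (w k)) (hlow : ∀ j, a j < u 0 + s j)
    (ℓ p : ℕ) : ∃ R : ℕ, ∀ q : ℕ, ∃ p' : ℕ,
      q ≤ p' ∧ p' + ℓ ≤ q + R ∧ ∀ j < ℓ, w (p' + j) = w (p + j) := by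
  have : Nonempty ι := ⟨w 0⟩
  obtain ⟨δ, hδ, hiso⟩ := hu.exists_pos_forall_abs_sub_lt (p + ℓ)
  obtain ⟨j₀, hj₀⟩ := Finite.exists_min fun j => u 0 + s j - a j
  obtain ⟨ε, hε, hε_iso, hε_low⟩ : ∃ ε > 0, 2 * ε < δ ∧ ∀ j, a j + 2 * ε < u 0 + s j := by
    have hmin := lt_min hδ (sub_pos.2 (hlow j₀))
    have hle₁ := min_le_left δ (u 0 + s j₀ - a j₀)
    have hle₂ := min_le_right δ (u 0 + s j₀ - a j₀)
    exact ⟨min δ (u 0 + s j₀ - a j₀) / 4, by positivity, by linarith,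
      fun j => by linarith [hj₀ j]⟩
  have hε_s : ∀ j, ε ≤ s j := fun j => by
    obtain ⟨k, hk⟩ := hmem j 0
    have : u 0 ≤ a j := by simpa [hk] using hu.monotone (Nat.zero_le k)
    linarith [hε_low j]
  obtain ⟨K, D, hK_mono, hK₀, hK_step, hK⟩ := exists_positions_of_progression hs hu hmem hw p
  obtain ⟨G, hG⟩ := exists_syndetic_simultaneous_approx (fun j => s (w p) / s j)
    (fun j => ε / s j) fun j => div_pos hε (hs j)
  refine ⟨p + (G + 1) * D + ℓ, fun q => ?_⟩
  obtain ⟨ν, hν, hqK, hKq⟩ := exists_syndetic_index hK_mono hK_step hG q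
  choose m hm using fun j => (hν j).elim fun z hz => exists_nat_abs_mul_sub_lt (hs j)
    (mul_nonneg ν.cast_nonneg (hs (w p)).le) (hε_s j) (by rwa [mul_div_assoc])
  have hm₀ : m (w p) = ν := Nat.eq_of_abs_mul_sub_mul_lt (hε_s (w p)) (hm (w p))
  refine ⟨K ν, hqK, by omega, fun i hi => apply_add_eq_of_eq_shift hs hdist hu hmem hw hm
    hε_low (fun i hi k hk => hiso (p + i) (by omega) k (by linarith)) ?_ i hi.le⟩
  rw [hK, hm₀]

theorem uniformlyRecurrent_of_arithmetic [Fintype ι] (hs : ∀ j, 0 < s j)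
    (hdist : ∀ i j, i ≠ j → ∀ n m : ℕ, a i + n * s i ≠ a j + m * s j) (hu : StrictMono u)
    (hmem : ∀ j (n : ℕ), ∃ k, u k = a j + n * s j)
    (hw : ∀ k, ∃ n : ℕ, u k = a (w k) + n * s (w k)) (hlow : ∀ j, a j < u 0 + s j) :
    UniformlyRecurrent w :=
  uniformlyRecurrent_of_forall_syndetic (exists_syndetic_recurrence hs hdist hu hmem hw hlow)

end Progressions

theorem order_word_uniformly_recurrent_general
    (d : ℕ) (r ρ : Fin d → ℝ)
    (hr : ∀ i, 0 < r i) (hρ : ∀ i, 1 < ρ i)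
    (hdistinct : ∀ i j, i ≠ j → ∀ n m : ℕ, r i * ρ i ^ n ≠ r j * ρ j ^ m)
    (hinter : ∀ i j : Fin d, ∀ n : ℕ, ∃ m : ℕ,
      r i * ρ i ^ n ≤ r j * ρ j ^ m ∧ r j * ρ j ^ m < ρ j * (r i * ρ i ^ n))
    (t : ℕ → ℝ) (ht : StrictMono t)
    (hrange : Set.range t = {x : ℝ | ∃ (i : Fin d) (n : ℕ), x = r i * ρ i ^ n})
    (w : ℕ → Fin d)
    (hw : ∀ k : ℕ, ∃ n : ℕ, t k = r (w k) * ρ (w k) ^ n) :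
    ∀ ℓ : ℕ, ∃ R : ℕ, ∀ p q : ℕ, ∃ p' : ℕ,
      q ≤ p' ∧ p' + ℓ ≤ q + R ∧ ∀ j < ℓ, w (p' + j) = w (p + j) := by
  have hρ₀ : ∀ i, 0 < ρ i := fun i => zero_lt_one.trans (hρ i)
  have hpos : ∀ i (n : ℕ), 0 < r i * ρ i ^ n := fun i n => mul_pos (hr i) (pow_pos (hρ₀ i) n)
  have hlog : ∀ i (n : ℕ), Real.log (r i * ρ i ^ n) = Real.log (r i) + n * Real.log (ρ i) :=
    fun i n => by rw [Real.log_mul (hr i).ne' (pow_pos (hρ₀ i) n).ne', Real.log_pow]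
  have ht_pos : ∀ k, 0 < t k := fun k => by obtain ⟨n, hn⟩ := hw k; exact hn ▸ hpos _ _
  refine uniformlyRecurrent_of_arithmetic (a := fun i => Real.log (r i))
    (s := fun i => Real.log (ρ i)) (u := fun k => Real.log (t k)) (fun i => Real.log_pos (hρ i))
    (fun i j hij n m h => hdistinct i j hij n m <| Real.log_injOn_pos (hpos i n) (hpos j m) <| by
      rwa [hlog, hlog]) (fun k k' h => Real.log_lt_log (ht_pos k) (ht h)) (fun i n => ?_)
    (fun k => (hw k).imp fun n hn => by rw [hn, hlog]) (fun j => ?_)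
  · obtain ⟨k, hk⟩ : r i * ρ i ^ n ∈ Set.range t := hrange ▸ ⟨i, n, rfl⟩
    exact ⟨k, by rw [hk, hlog]⟩
  · obtain ⟨n₀, hn₀⟩ := hw 0
    obtain ⟨m, -, hm⟩ := hinter (w 0) j n₀
    have hlt : r j < ρ j * t 0 := hn₀ ▸
      (le_mul_of_one_le_right (hr j).le (one_le_pow₀ (hρ j).le)).trans_lt hm
    have := Real.log_lt_log (hr j) hlt
    rw [Real.log_mul (hρ₀ j).ne' (ht_pos 0).ne'] at this
    linarith

/-- The order word of finitely many geometric sequences `n ↦ r i * ρ i ^ n`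
(normalized so that distinctness and interleaving hold) is uniformly
recurrent. -/
theorem order_word_uniformly_recurrent
    (d : ℕ) (hd : 1 ≤ d) (r ρ : Fin d → ℝ)
    (hr : ∀ i, 0 < r i) (hρ : ∀ i, 1 < ρ i)
    (hdistinct : ∀ i j, i ≠ j → ∀ n m : ℕ, r i * ρ i ^ n ≠ r j * ρ j ^ m)
    (hinter : ∀ i j : Fin d, ∀ n : ℕ, ∃ m : ℕ,
      r i * ρ i ^ n ≤ r j * ρ j ^ m ∧ r j * ρ j ^ m < ρ j * (r i * ρ i ^ n))
    (t : ℕ → ℝ) (ht : StrictMono t)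
    (hrange : Set.range t = {x : ℝ | ∃ (i : Fin d) (n : ℕ), x = r i * ρ i ^ n})
    (w : ℕ → Fin d)
    (hw : ∀ k : ℕ, ∃ n : ℕ, t k = r (w k) * ρ (w k) ^ n) :
    ∀ ℓ : ℕ, ∃ R : ℕ, ∀ p q : ℕ, ∃ p' : ℕ,
      q ≤ p' ∧ p' + ℓ ≤ q + R ∧ ∀ j < ℓ, w (p' + j) = w (p + j) :=
  order_word_uniformly_recurrent_general d r ρ hr hρ hdistinct hinter t ht hrange w hw
end
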